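/- arXiv:2409.01910 — 3 statements merged into one kernel-verified Lean document; each statement's English description precedes it below -/
import Mathlib

section
/- If M(v) = exp(α + β·v − γ|v|^2) with γ > 0, and s_0 = ∫ (|v_1|/Δx) M(v) dv, s_i = ∫ v_i (|v_1|/Δx) M(v) dv for i = 1,...,d, and s_{d+1} = ∫ |v|^2 (|v_1|/Δx) M(v) dv, then s_0 > 0 and s_0 s_{d+1} > s_1^2 + ... + s_d^2. -/
open MeasureTheory Real Function
open scoped RealInnerProductSpace

/-!
Put `w v = |v₁| M v / Δx`. Then `w ≥ 0`, `w` has finite moments up to order two (Gaussian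
decay of `M`), and `w > 0` off the null hyperplane `v₁ = 0`, so the measure `w dv` is not
carried by a single point. The inequality is the strict Cauchy–Schwarz inequality
`‖∫ w v‖² < (∫ w) (∫ ‖v‖² w)`, which is the positivity of the variance `∫ ‖v - t‖² w` about the
barycentre `t = (∫ w v) / ∫ w`.
-/

lemma norm_sub_sq_mul_eq {E : Type*} [NormedAddCommGroup E] [InnerProductSpace ℝ E]
    (w : ℝ) (v t : E) :
    ‖v - t‖ ^ 2 * w = ‖v‖ ^ 2 * w - 2 * ⟪t, w • v⟫ + ‖t‖ ^ 2 * w := by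
  rw [norm_sub_sq_real, real_inner_smul_right, real_inner_comm]
  ring

section WeightedVariance

variable {E : Type*} [NormedAddCommGroup E] [InnerProductSpace ℝ E] [MeasurableSpace E]
  {μ : Measure E} {w : E → ℝ}

lemma integrable_norm_sub_sq_mul (hw0 : Integrable w μ) (hw1 : Integrable (fun v => w v • v) μ)
    (hw2 : Integrable (fun v => ‖v‖ ^ 2 * w v) μ) (t : E) :
    Integrable (fun v => ‖v - t‖ ^ 2 * w v) μ := by
  simp_rw [norm_sub_sq_mul_eq]
  exact (hw2.sub ((hw1.const_inner t).const_mul 2)).add (hw0.const_mul _)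

lemma integral_norm_sub_sq_mul [CompleteSpace E] (hw0 : Integrable w μ)
    (hw1 : Integrable (fun v => w v • v) μ) (hw2 : Integrable (fun v => ‖v‖ ^ 2 * w v) μ) (t : E) :
    ∫ v, ‖v - t‖ ^ 2 * w v ∂μ =
      ∫ v, ‖v‖ ^ 2 * w v ∂μ - 2 * ⟪t, ∫ v, w v • v ∂μ⟫ + ‖t‖ ^ 2 * ∫ v, w v ∂μ := by
  simp_rw [norm_sub_sq_mul_eq]
  have hlin : Integrable (fun v => 2 * ⟪t, w v • v⟫) μ :=
    (hw1.const_inner t).const_mul 2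
  rw [integral_add (f := fun v => ‖v‖ ^ 2 * w v - 2 * ⟪t, w v • v⟫) (hw2.sub hlin)
    (hw0.const_mul _), integral_sub hw2 hlin, integral_const_mul, integral_const_mul,
    integral_inner hw1]

theorem norm_integral_smul_sq_lt_integral_mul_integral [CompleteSpace E] [NullSingletonClass μ]
    (hw : 0 ≤ w) (hw0 : Integrable w μ) (hw1 : Integrable (fun v => w v • v) μ)
    (hw2 : Integrable (fun v => ‖v‖ ^ 2 * w v) μ) (hsupp : 0 < μ (support w)) :
    ‖∫ v, w v • v ∂μ‖ ^ 2 < (∫ v, w v ∂μ) * ∫ v, ‖v‖ ^ 2 * w v ∂μ := by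
  set m := ∫ v, w v ∂μ with hm_def
  set s := ∫ v, w v • v ∂μ
  set q := ∫ v, ‖v‖ ^ 2 * w v ∂μ
  have hm : 0 < m := (integral_pos_iff_support_of_nonneg hw hw0).2 hsupp
  have hvar : 0 < ∫ v, ‖v - m⁻¹ • s‖ ^ 2 * w v ∂μ := by
    refine (integral_pos_iff_support_of_nonneg (fun v => mul_nonneg (sq_nonneg _) (hw v))
      (integrable_norm_sub_sq_mul hw0 hw1 hw2 _)).2 ?_
    refine hsupp.trans_le ?_
    rw [← measure_sdiff_null (measure_singleton (m⁻¹ • s))]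
    refine measure_mono fun v ⟨hv, hvt⟩ => mul_ne_zero ?_ hv
    exact pow_ne_zero 2 (norm_ne_zero_iff.2 (sub_ne_zero.2 hvt))
  have hvar_eq : ∫ v, ‖v - m⁻¹ • s‖ ^ 2 * w v ∂μ = (m * q - ‖s‖ ^ 2) / m := by
    rw [integral_norm_sub_sq_mul hw0 hw1 hw2, ← hm_def, real_inner_smul_left,
      real_inner_self_eq_norm_sq, norm_smul, norm_inv, norm_of_nonneg hm.le]
    field_simp
    ring
  rwa [hvar_eq, div_pos_iff_of_pos_right hm, sub_pos] at hvar

end WeightedVariance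

lemma pow_mul_exp_neg_mul_sq_le {x c : ℝ} (hx : 0 ≤ x) (hc : 0 < c) (k : ℕ) :
    x ^ k * exp (-c * x ^ 2) ≤ exp (k ^ 2 / (4 * c)) := by
  have hpow : x ^ k ≤ exp (k * x) := by
    rw [exp_nat_mul]
    exact pow_le_pow_left₀ hx (by linarith [add_one_le_exp x]) k
  have hquad : k * x - c * x ^ 2 ≤ k ^ 2 / (4 * c) := by
    rw [le_div_iff₀ (by positivity)]
    nlinarith [sq_nonneg (k - 2 * c * x)]
  calc x ^ k * exp (-c * x ^ 2) ≤ exp (k * x) * exp (-c * x ^ 2) := by gcongr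
    _ ≤ exp (k ^ 2 / (4 * c)) := by rw [← exp_add]; gcongr; linarith

section Gaussian

variable {V : Type*} [NormedAddCommGroup V] [InnerProductSpace ℝ V] [FiniteDimensional ℝ V]
  [MeasurableSpace V] [BorelSpace V]

lemma integrable_exp_neg_mul_sq_norm_add_inner {γ : ℝ} (hγ : 0 < γ) (β : V) :
    Integrable fun v : V => exp (-γ * ‖v‖ ^ 2 + ⟪β, v⟫) := by
  have := (GaussianFourier.integrable_cexp_neg_mul_sq_norm_add (V := V) (b := γ)
    (by simpa using hγ) 1 β).norm
  convert this using 2 with v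
  rw [Complex.norm_exp, one_mul]
  norm_cast

theorem integrable_norm_pow_mul_exp_quadratic (k : ℕ) (α : ℝ) (β : V) {γ : ℝ} (hγ : 0 < γ) :
    Integrable fun v : V => ‖v‖ ^ k * exp (α + ⟪β, v⟫ - γ * ‖v‖ ^ 2) := by
  refine ((integrable_exp_neg_mul_sq_norm_add_inner (half_pos hγ) β).const_mul
    (exp α * exp (k ^ 2 / (4 * (γ / 2))))).mono' (by fun_prop) (.of_forall fun v => ?_)
  have hsplit : exp (α + ⟪β, v⟫ - γ * ‖v‖ ^ 2) =
      exp α * exp (-(γ / 2) * ‖v‖ ^ 2) * exp (-(γ / 2) * ‖v‖ ^ 2 + ⟪β, v⟫) := by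
    rw [← exp_add, ← exp_add]; ring_nf
  rw [norm_mul, norm_pow, norm_norm, norm_of_nonneg (exp_pos _).le, hsplit]
  calc _ = exp α * (‖v‖ ^ k * exp (-(γ / 2) * ‖v‖ ^ 2)) *
          exp (-(γ / 2) * ‖v‖ ^ 2 + ⟪β, v⟫) := by ring
    _ ≤ _ := by grw [pow_mul_exp_neg_mul_sq_le (norm_nonneg v) (half_pos hγ) k]

end Gaussian

section FluxWeight

variable {ι : Type*} [Fintype ι] {M : EuclideanSpace ℝ ι → ℝ} {Δx : ℝ}

lemma integrable_norm_pow_mul_abs_apply_div_mul (i : ι) {k : ℕ} (hM : AEStronglyMeasurable M)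
    (hMk : Integrable fun v => ‖v‖ ^ (k + 1) * M v) :
    Integrable fun v => ‖v‖ ^ k * (|v i| / Δx * M v) := by
  refine (hMk.norm.const_mul |Δx|⁻¹).mono' (by fun_prop) (.of_forall fun v => ?_)
  have hvi : |v i| ≤ ‖v‖ := PiLp.norm_apply_le v i
  simp only [norm_mul, norm_pow, norm_div, norm_eq_abs, abs_abs, abs_norm]
  calc ‖v‖ ^ k * (|v i| / |Δx| * |M v|) = |Δx|⁻¹ * (‖v‖ ^ k * |v i| * |M v|) := by ring
    _ ≤ |Δx|⁻¹ * (‖v‖ ^ (k + 1) * |M v|) := by grw [hvi, pow_succ]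

lemma integrable_abs_apply_div_mul_smul (i : ι) (hM : AEStronglyMeasurable M)
    (hM2 : Integrable fun v => ‖v‖ ^ 2 * M v) :
    Integrable fun v => (|v i| / Δx * M v) • v := by
  refine (hM2.norm.const_mul |Δx|⁻¹).mono' (by fun_prop) (.of_forall fun v => ?_)
  have hvi : |v i| ≤ ‖v‖ := PiLp.norm_apply_le v i
  simp only [norm_smul, norm_mul, norm_pow, norm_div, norm_eq_abs, abs_abs, abs_norm]
  calc |v i| / |Δx| * |M v| * ‖v‖ = |Δx|⁻¹ * (|v i| * ‖v‖ * |M v|) := by ring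
    _ ≤ |Δx|⁻¹ * (‖v‖ ^ 2 * |M v|) := by grw [hvi, sq]

lemma volume_support_abs_apply_div_mul_pos (i : ι) (hΔx : Δx ≠ 0) (hM : ∀ v, M v ≠ 0) :
    0 < volume (support fun v : EuclideanSpace ℝ ι => |v i| / Δx * M v) := by
  classical
  have hsupp : (support fun v : EuclideanSpace ℝ ι => |v i| / Δx * M v) = {v | v i ≠ 0} := by
    ext v; simp [hΔx, hM]
  rw [hsupp]
  exact (isOpen_ne_fun (by fun_prop) continuous_const).measure_pos volume
    ⟨EuclideanSpace.single i 1, by simp⟩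

end FluxWeight

theorem maxwellian_weighted_moments_condition
    (d : ℕ) (hd : 0 < d) (Δx : ℝ) (hΔx : 0 < Δx)
    (α : ℝ) (β : EuclideanSpace ℝ (Fin d)) (γ : ℝ) (hγ : 0 < γ)
    (M : EuclideanSpace ℝ (Fin d) → ℝ)
    (hM : ∀ v, M v = Real.exp (α + (∑ i, β i * v i) - γ * ‖v‖ ^ 2))
    (s₀ sd1 : ℝ) (s : Fin d → ℝ)
    (hs₀ : s₀ = ∫ v, (|v ⟨0, hd⟩| / Δx) * M v)
    (hs : ∀ i : Fin d, s i = ∫ v, v i * (|v ⟨0, hd⟩| / Δx) * M v)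
    (hsd1 : sd1 = ∫ v, ‖v‖ ^ 2 * (|v ⟨0, hd⟩| / Δx) * M v) :
    0 < s₀ ∧ (∑ i, s i ^ 2) < s₀ * sd1 := by
  -- makes `volume` on `EuclideanSpace ℝ (Fin d)` atomless
  have : Nonempty (Fin d) := ⟨⟨0, hd⟩⟩
  set w : EuclideanSpace ℝ (Fin d) → ℝ := fun v => |v ⟨0, hd⟩| / Δx * M v
  have hMpos : ∀ v, 0 < M v := fun v => hM v ▸ exp_pos _
  have hMint (k : ℕ) : Integrable fun v => ‖v‖ ^ k * M v := by
    simpa [hM, PiLp.inner_apply, mul_comm] using integrable_norm_pow_mul_exp_quadratic k α β hγ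
  have hMmeas : AEStronglyMeasurable M := by simpa using (hMint 0).aestronglyMeasurable
  have hw : 0 ≤ w := fun v => by have := hMpos v; positivity
  have hw0 : Integrable w := by
    simpa using integrable_norm_pow_mul_abs_apply_div_mul _ hMmeas (hMint 1)
  have hw1 := integrable_abs_apply_div_mul_smul (Δx := Δx) ⟨0, hd⟩ hMmeas (hMint 2)
  have hw2 := integrable_norm_pow_mul_abs_apply_div_mul (Δx := Δx) ⟨0, hd⟩ hMmeas (hMint 3)
  have hsupp := volume_support_abs_apply_div_mul_pos ⟨0, hd⟩ hΔx.ne' fun v => (hMpos v).ne'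
  have hs' : ∀ i, s i = (∫ v, w v • v) i := fun i => by
    rw [hs, eval_integral_piLp hw1.eval_piLp]
    refine integral_congr_ae (.of_forall fun v => ?_)
    simp only [PiLp.smul_apply, smul_eq_mul]
    ring
  refine ⟨hs₀ ▸ (integral_pos_iff_support_of_nonneg hw hw0).2 hsupp, ?_⟩
  simpa [hs₀, hsd1, hs', EuclideanSpace.real_norm_sq_eq, mul_assoc] using
    norm_integral_smul_sq_lt_integral_mul_integral hw hw0 hw1 hw2 hsupp
end

section
/- The discrete Maxwellian M_k = exp(α + β·v_k − γ|v_k|^2) satisfying the discrete moment constraints Σ_k w_k φ(v_k) M_k = Σ_k w_k φ(v_k) f_k, where φ(v) = (1, v_1, ..., v_d, |v|^2), minimizes the discrete entropy Σ_k w_k (g_k log g_k − g_k) over all positive vectors g = (g_1,...,g_K) satisfying the same moment constraints. -/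
open Real

theorem discrete_maxwellian_minimizes_entropy
    (d K : ℕ) (v : Fin K → EuclideanSpace ℝ (Fin d))
    (w : Fin K → ℝ) (hw : ∀ k, 0 < w k)
    (f : Fin K → ℝ) (hf : ∀ k, 0 < f k)
    (α : ℝ) (β : EuclideanSpace ℝ (Fin d)) (γ : ℝ) (hγ : 0 < γ)
    (M : Fin K → ℝ)
    (hM : ∀ k, M k = Real.exp (α + (∑ i, β i * v k i) - γ * ‖v k‖ ^ 2))
    (hc0 : (∑ k, w k * M k) = ∑ k, w k * f k)
    (hc1 : ∀ i : Fin d, (∑ k, w k * v k i * M k) = ∑ k, w k * v k i * f k)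
    (hc2 : (∑ k, w k * ‖v k‖ ^ 2 * M k) = ∑ k, w k * ‖v k‖ ^ 2 * f k) :
    ∀ g : Fin K → ℝ, (∀ k, 0 < g k) →
      (∑ k, w k * g k) = (∑ k, w k * f k) →
      (∀ i : Fin d, (∑ k, w k * v k i * g k) = ∑ k, w k * v k i * f k) →
      (∑ k, w k * ‖v k‖ ^ 2 * g k) = (∑ k, w k * ‖v k‖ ^ 2 * f k) →
      (∑ k, w k * (M k * Real.log (M k) - M k)) ≤
        ∑ k, w k * (g k * Real.log (g k) - g k) := by
  intro g hg hg0 hg1 hg2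
  have hMpos : ∀ k, 0 < M k := fun k => by rw [hM]; exact Real.exp_pos _
  -- pointwise convexity inequality
  have key : ∀ k ∈ Finset.univ, w k * (M k * Real.log (M k) - M k)
      + w k * (Real.log (M k) * (g k - M k)) ≤ w k * (g k * Real.log (g k) - g k) := by
    intro k _
    rw [← mul_add]
    refine mul_le_mul_of_nonneg_left ?_ (hw k).le
    have h1 : Real.log (M k / g k) ≤ M k / g k - 1 :=
      Real.log_le_sub_one_of_pos (div_pos (hMpos k) (hg k))
    rw [Real.log_div (hMpos k).ne' (hg k).ne'] at h1
    have h2 : g k * (Real.log (M k) - Real.log (g k)) ≤ g k * (M k / g k - 1) :=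
      mul_le_mul_of_nonneg_left h1 (hg k).le
    have h3 : g k * (M k / g k) = M k := by
      rw [mul_comm, div_mul_eq_mul_div, mul_div_assoc, div_self (hg k).ne', mul_one]
    nlinarith [h2, h3]
  have hsum := Finset.sum_le_sum key
  rw [Finset.sum_add_distrib] at hsum
  -- the linear term vanishes by the moment constraints
  have hzero : ∑ k, w k * (Real.log (M k) * (g k - M k)) = 0 := by
    have e : ∀ k, w k * (Real.log (M k) * (g k - M k)) =
        α * (w k * g k - w k * M k)
        + (∑ i, β i * (w k * v k i * g k - w k * v k i * M k))
        - γ * (w k * ‖v k‖ ^ 2 * g k - w k * ‖v k‖ ^ 2 * M k) := by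
      intro k
      have hL : Real.log (M k) = α + (∑ i, β i * v k i) - γ * ‖v k‖ ^ 2 := by
        rw [hM, Real.log_exp]
      rw [hL]
      have hS : (∑ i, β i * v k i) * (w k * (g k - M k))
          = ∑ i, β i * (w k * v k i * g k - w k * v k i * M k) := by
        rw [Finset.sum_mul]; exact Finset.sum_congr rfl fun i _ => by ring
      calc w k * ((α + (∑ i, β i * v k i) - γ * ‖v k‖ ^ 2) * (g k - M k))
          = α * (w k * g k - w k * M k)
            + (∑ i, β i * v k i) * (w k * (g k - M k))
            - γ * (w k * ‖v k‖ ^ 2 * g k - w k * ‖v k‖ ^ 2 * M k) := by ring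
        _ = _ := by rw [hS]
    rw [Finset.sum_congr rfl fun k _ => e k]
    have t0 : ∑ k, α * (w k * g k - w k * M k) = 0 := by
      rw [← Finset.mul_sum, Finset.sum_sub_distrib, hg0, hc0]; ring
    have t1 : ∀ i : Fin d, ∑ k, β i * (w k * v k i * g k - w k * v k i * M k) = 0 := by
      intro i
      rw [← Finset.mul_sum, Finset.sum_sub_distrib, hg1 i, hc1 i]; ring
    have t2 : ∑ k, γ * (w k * ‖v k‖ ^ 2 * g k - w k * ‖v k‖ ^ 2 * M k) = 0 := by
      rw [← Finset.mul_sum, Finset.sum_sub_distrib, hg2, hc2]; ring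
    calc (∑ k, (α * (w k * g k - w k * M k)
          + (∑ i, β i * (w k * v k i * g k - w k * v k i * M k))
          - γ * (w k * ‖v k‖ ^ 2 * g k - w k * ‖v k‖ ^ 2 * M k)))
        = (∑ k, α * (w k * g k - w k * M k))
          + (∑ i, ∑ k, β i * (w k * v k i * g k - w k * v k i * M k))
          - ∑ k, γ * (w k * ‖v k‖ ^ 2 * g k - w k * ‖v k‖ ^ 2 * M k) := by
          rw [Finset.sum_sub_distrib, Finset.sum_add_distrib, Finset.sum_comm]
      _ = 0 := by
          rw [t0, t2, Finset.sum_congr rfl fun i _ => t1 i]; simp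
  linarith
end

section
/- The BGK operator satisfies the H-theorem inequality: ∫ Q^{BGK}[f](v) log f(v) dv ≤ 0, with equality if and only if f = M[f] almost everywhere. -/
/-!
The logarithm of the Maxwellian `M[f]` is an affine combination of the collision invariants `1` and
`‖v - U‖²`, and `M[f]` has the mass and energy of `f`, so `∫ (M - f) log M = 0`. Hence
`∫ (M - f) log f = -∫ (M - f) (log M - log f)`, whose integrand is pointwise nonnegative and vanishes
exactly where `f = M`, since `log` is strictly increasing.
-/

open MeasureTheory Real Set Module Metric

lemma pow_pred_mul_pow_eq_rpow {n : ℕ} (hn : 1 ≤ n) (k : ℕ) (y : ℝ) :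
    y ^ (n - 1) * y ^ k = y ^ ((n : ℝ) + k - 1) := by
  rw [← pow_add, ← rpow_natCast]
  push_cast [Nat.sub_add_comm hn, hn]
  ring_nf

section GaussianMoments

variable {E : Type*} [NormedAddCommGroup E] [NormedSpace ℝ E] [Nontrivial E] [FiniteDimensional ℝ E]
  [MeasurableSpace E] [BorelSpace E] (μ : Measure E) [μ.IsAddHaarMeasure] {b : ℝ}

lemma integrable_norm_pow_mul_exp_neg_mul_sq_norm (k : ℕ) (hb : 0 < b) :
    Integrable (fun x => ‖x‖ ^ k * exp (-b * ‖x‖ ^ 2)) μ := by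
  rw [integrable_fun_norm_addHaar μ (f := fun r => r ^ k * exp (-b * r ^ 2))]
  have hn : 1 ≤ finrank ℝ E := finrank_pos
  refine (integrableOn_rpow_mul_exp_neg_mul_sq hb (s := finrank ℝ E + k - 1) ?_).congr_fun
    (fun y _ => ?_) measurableSet_Ioi
  · have : (1 : ℝ) ≤ finrank ℝ E := by exact_mod_cast hn
    linarith [(k.cast_nonneg : (0 : ℝ) ≤ k)]
  · simp only [smul_eq_mul, ← mul_assoc, pow_pred_mul_pow_eq_rpow hn]

lemma integral_norm_pow_mul_exp_neg_mul_sq_norm (k : ℕ) (hb : 0 < b) :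
    ∫ x, ‖x‖ ^ k * exp (-b * ‖x‖ ^ 2) ∂μ = finrank ℝ E * μ.real (ball 0 1) *
      (b ^ (-((finrank ℝ E + k : ℝ) / 2)) * (1 / 2) * Gamma ((finrank ℝ E + k : ℝ) / 2)) := by
  have hn : 1 ≤ finrank ℝ E := finrank_pos
  rw [integral_fun_norm_addHaar μ (fun r => r ^ k * exp (-b * r ^ 2)), nsmul_eq_mul, smul_eq_mul,
    mul_assoc]
  congr 2
  have hq : (-1 : ℝ) < finrank ℝ E + k - 1 := by
    have : (1 : ℝ) ≤ finrank ℝ E := by exact_mod_cast hn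
    linarith [(k.cast_nonneg : (0 : ℝ) ≤ k)]
  calc ∫ y in Ioi 0, y ^ (finrank ℝ E - 1) • (y ^ k * exp (-b * y ^ 2))
      = ∫ y in Ioi 0, y ^ ((finrank ℝ E : ℝ) + k - 1) * exp (-b * y ^ (2 : ℝ)) := by
        refine setIntegral_congr_fun measurableSet_Ioi fun y _ => ?_
        simp only [smul_eq_mul, ← mul_assoc, pow_pred_mul_pow_eq_rpow hn, rpow_two]
    _ = _ := by
        rw [integral_rpow_mul_exp_neg_mul_rpow two_pos hq hb]
        ring_nf

/-- In polar coordinates both sides are Gamma integrals; the factor is `Γ(n/2 + 1) = (n/2) Γ(n/2)`. -/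
lemma integral_norm_sq_mul_exp_neg_mul_sq_norm (hb : 0 < b) :
    ∫ x, ‖x‖ ^ 2 * exp (-b * ‖x‖ ^ 2) ∂μ = finrank ℝ E / (2 * b) * ∫ x, exp (-b * ‖x‖ ^ 2) ∂μ := by
  have h0 := integral_norm_pow_mul_exp_neg_mul_sq_norm μ 0 hb
  simp only [pow_zero, one_mul, Nat.cast_zero, add_zero] at h0
  have hn : (finrank ℝ E : ℝ) / 2 ≠ 0 := by simp [finrank_pos.ne']
  rw [integral_norm_pow_mul_exp_neg_mul_sq_norm μ 2 hb, h0, Nat.cast_ofNat,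
    add_div, div_self two_ne_zero, Gamma_add_one hn, neg_add, rpow_add hb, rpow_neg_one]
  field_simp

end GaussianMoments

section Moments

variable {α : Type*} [MeasurableSpace α] {μ : Measure α} {g h φ : α → ℝ}

lemma integrable_sub_mul_affine (hg : Integrable g μ) (hh : Integrable h μ)
    (hφg : Integrable (fun x => φ x * g x) μ) (hφh : Integrable (fun x => φ x * h x) μ) (a c : ℝ) :
    Integrable (fun x => (g x - h x) * (a + c * φ x)) μ :=
  (((hg.sub hh).const_mul a).add ((hφg.sub hφh).const_mul c)).congr
    (.of_forall fun x => by simp only [Pi.add_apply, Pi.sub_apply]; ring)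

lemma integral_sub_mul_affine_eq_zero (hg : Integrable g μ) (hh : Integrable h μ)
    (hφg : Integrable (fun x => φ x * g x) μ) (hφh : Integrable (fun x => φ x * h x) μ)
    (hmass : ∫ x, g x ∂μ = ∫ x, h x ∂μ) (hφ : ∫ x, φ x * g x ∂μ = ∫ x, φ x * h x ∂μ) (a c : ℝ) :
    ∫ x, (g x - h x) * (a + c * φ x) ∂μ = 0 := by
  calc ∫ x, (g x - h x) * (a + c * φ x) ∂μ
      = ∫ x, (a * (g x - h x) + c * (φ x * g x - φ x * h x)) ∂μ :=
        integral_congr_ae (.of_forall fun x => by ring)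
    _ = 0 := by
        have hmass_int : Integrable (fun x => a * (g x - h x)) μ := (hg.sub hh).const_mul a
        have hφ_int : Integrable (fun x => c * (φ x * g x - φ x * h x)) μ :=
          (hφg.sub hφh).const_mul c
        rw [integral_add hmass_int hφ_int,
          integral_const_mul, integral_const_mul, integral_sub hg hh, integral_sub hφg hφh,
          hmass, hφ]
        ring

end Moments

section Maxwellian

variable {E : Type*} [NormedAddCommGroup E] [InnerProductSpace ℝ E]

noncomputable def maxwellian (ρ : ℝ) (U : E) (T : ℝ) (v : E) : ℝ :=
  ρ / (2 * π * T) ^ ((finrank ℝ E : ℝ) / 2) * exp (-‖v - U‖ ^ 2 / (2 * T))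

variable {ρ T : ℝ} {U : E}

lemma maxwellian_eq (ρ : ℝ) (U : E) (T : ℝ) (v : E) :
    maxwellian ρ U T v = ρ / (2 * π * T) ^ ((finrank ℝ E : ℝ) / 2) *
      exp (-(2 * T)⁻¹ * ‖v - U‖ ^ 2) := by
  rw [maxwellian]; ring_nf

lemma maxwellian_pos (hρ : 0 < ρ) (hT : 0 < T) (v : E) : 0 < maxwellian ρ U T v := by
  unfold maxwellian; positivity

lemma log_maxwellian (hρ : 0 < ρ) (hT : 0 < T) (v : E) :
    log (maxwellian ρ U T v) =
      log (ρ / (2 * π * T) ^ ((finrank ℝ E : ℝ) / 2)) + -(2 * T)⁻¹ * ‖v - U‖ ^ 2 := by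
  rw [maxwellian_eq, log_mul (by positivity) (exp_pos _).ne', log_exp]

variable [FiniteDimensional ℝ E] [MeasurableSpace E] [BorelSpace E]

lemma integral_exp_neg_inv_two_mul_norm_sub_sq (hT : 0 < T) :
    ∫ v, exp (-(2 * T)⁻¹ * ‖v - U‖ ^ 2) = (2 * π * T) ^ ((finrank ℝ E : ℝ) / 2) := by
  rw [integral_sub_right_eq_self (fun v => exp (-(2 * T)⁻¹ * ‖v‖ ^ 2)),
    GaussianFourier.integral_rexp_neg_mul_sq_norm (by positivity), div_inv_eq_mul]
  ring_nf

lemma integral_maxwellian (hT : 0 < T) : ∫ v, maxwellian ρ U T v = ρ := by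
  have : 0 < (2 * π * T) ^ ((finrank ℝ E : ℝ) / 2) := by positivity
  simp_rw [maxwellian_eq]
  rw [integral_const_mul, integral_exp_neg_inv_two_mul_norm_sub_sq hT]
  field_simp

variable [Nontrivial E]

lemma integrable_norm_sub_pow_mul_maxwellian (k : ℕ) (hT : 0 < T) :
    Integrable (fun v => ‖v - U‖ ^ k * maxwellian ρ U T v) := by
  refine (((integrable_norm_pow_mul_exp_neg_mul_sq_norm volume k
    (inv_pos.2 (by positivity : 0 < 2 * T))).comp_sub_right U).const_mul
      (ρ / (2 * π * T) ^ ((finrank ℝ E : ℝ) / 2))).congr (.of_forall fun v => ?_)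
  simp only [maxwellian_eq]; ring

lemma integrable_maxwellian (hT : 0 < T) : Integrable (maxwellian ρ U T) := by
  simpa using integrable_norm_sub_pow_mul_maxwellian (ρ := ρ) (U := U) 0 hT

lemma integral_norm_sub_sq_mul_maxwellian (hT : 0 < T) :
    ∫ v, ‖v - U‖ ^ 2 * maxwellian ρ U T v = finrank ℝ E * ρ * T := by
  have hb : 0 < (2 * T)⁻¹ := by positivity
  have : 0 < (2 * π * T) ^ ((finrank ℝ E : ℝ) / 2) := by positivity
  calc ∫ v, ‖v - U‖ ^ 2 * maxwellian ρ U T v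
      = ρ / (2 * π * T) ^ ((finrank ℝ E : ℝ) / 2) *
          ∫ v, ‖v - U‖ ^ 2 * exp (-(2 * T)⁻¹ * ‖v - U‖ ^ 2) := by
        rw [← integral_const_mul]
        simp_rw [maxwellian_eq]
        exact integral_congr_ae (.of_forall fun v => by ring)
    _ = ρ / (2 * π * T) ^ ((finrank ℝ E : ℝ) / 2) *
          (finrank ℝ E / (2 * (2 * T)⁻¹) * ∫ v, exp (-(2 * T)⁻¹ * ‖v - U‖ ^ 2)) := by
        rw [integral_sub_right_eq_self (fun v => ‖v‖ ^ 2 * exp (-(2 * T)⁻¹ * ‖v‖ ^ 2)),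
          integral_norm_sq_mul_exp_neg_mul_sq_norm volume hb,
          integral_sub_right_eq_self (fun v => exp (-(2 * T)⁻¹ * ‖v‖ ^ 2))]
    _ = finrank ℝ E * ρ * T := by
        rw [integral_exp_neg_inv_two_mul_norm_sub_sq hT]
        field_simp

variable {f : E → ℝ}

lemma integrable_sub_mul_log_maxwellian (hρ : 0 < ρ) (hT : 0 < T) (hf : Integrable f)
    (hf₂ : Integrable (fun v => ‖v - U‖ ^ 2 * f v)) :
    Integrable (fun v => (maxwellian ρ U T v - f v) * log (maxwellian ρ U T v)) := by
  simp_rw [log_maxwellian hρ hT]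
  exact integrable_sub_mul_affine (integrable_maxwellian hT) hf
    (integrable_norm_sub_pow_mul_maxwellian 2 hT) hf₂ _ _

lemma integral_sub_mul_log_maxwellian_eq_zero (hρ : 0 < ρ) (hT : 0 < T) (hf : Integrable f)
    (hf₂ : Integrable (fun v => ‖v - U‖ ^ 2 * f v)) (hmass : ∫ v, f v = ρ)
    (henergy : ∫ v, ‖v - U‖ ^ 2 * f v = finrank ℝ E * ρ * T) :
    ∫ v, (maxwellian ρ U T v - f v) * log (maxwellian ρ U T v) = 0 := by
  simp_rw [log_maxwellian hρ hT]
  exact integral_sub_mul_affine_eq_zero (integrable_maxwellian hT) hf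
    (integrable_norm_sub_pow_mul_maxwellian 2 hT) hf₂
    (by rw [integral_maxwellian hT, hmass])
    (by rw [integral_norm_sub_sq_mul_maxwellian hT, henergy]) _ _

end Maxwellian

lemma sub_mul_log_sub_log_nonneg {a b : ℝ} (ha : 0 < a) (hb : 0 < b) :
    0 ≤ (a - b) * (log a - log b) := by
  rcases le_total a b with hab | hab
  · exact mul_nonneg_of_nonpos_of_nonpos (by linarith) (by linarith [log_le_log ha hab])
  · exact mul_nonneg (by linarith) (by linarith [log_le_log hb hab])

lemma sub_mul_log_sub_log_eq_zero_iff {a b : ℝ} (ha : 0 < a) (hb : 0 < b) :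
    (a - b) * (log a - log b) = 0 ↔ a = b := by
  rw [mul_eq_zero, sub_eq_zero, sub_eq_zero, or_iff_left_of_imp (log_injOn_pos ha hb)]

theorem integral_sub_mul_log_nonpos_and_eq_zero_iff {α : Type*} [MeasurableSpace α]
    {μ : Measure α} {f g : α → ℝ} (hf : ∀ x, 0 < f x) (hg : ∀ x, 0 < g x)
    (hg_log : Integrable (fun x => (g x - f x) * log (g x)) μ)
    (hf_log : Integrable (fun x => (g x - f x) * log (f x)) μ)
    (h_orth : ∫ x, (g x - f x) * log (g x) ∂μ = 0) :
    ∫ x, (g x - f x) * log (f x) ∂μ ≤ 0 ∧ (∫ x, (g x - f x) * log (f x) ∂μ = 0 ↔ f =ᵐ[μ] g) := by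
  set production := fun x => (g x - f x) * (log (g x) - log (f x))
  have h_nonneg : 0 ≤ production := fun x => sub_mul_log_sub_log_nonneg (hg x) (hf x)
  have h_int : Integrable production μ :=
    (hg_log.sub hf_log).congr (.of_forall fun x => by simp only [Pi.sub_apply, production]; ring)
  have h_eq : ∫ x, (g x - f x) * log (f x) ∂μ = -∫ x, production x ∂μ := by
    have : ∫ x, production x ∂μ =
        ∫ x, (g x - f x) * log (g x) ∂μ - ∫ x, (g x - f x) * log (f x) ∂μ := by
      rw [← integral_sub hg_log hf_log]
      exact integral_congr_ae (.of_forall fun x => by simp only [production]; ring)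
    linarith
  refine ⟨h_eq ▸ neg_nonpos.2 (integral_nonneg h_nonneg), ?_⟩
  rw [h_eq, neg_eq_zero, integral_eq_zero_iff_of_nonneg h_nonneg h_int]
  refine Filter.eventually_congr (.of_forall fun x => ?_)
  rw [Pi.zero_apply, sub_mul_log_sub_log_eq_zero_iff (hg x) (hf x), eq_comm]

theorem bgk_H_theorem_general
    (d : ℕ) (ν : ℝ) (hν : 0 < ν)
    (f : EuclideanSpace ℝ (Fin d) → ℝ)
    (hf_pos : ∀ v, 0 < f v)
    (ρ : ℝ) (hρ : ρ = ∫ v, f v)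
    (U : EuclideanSpace ℝ (Fin d))
    (T : ℝ) (hT : T = (1 / (d * ρ)) * ∫ v, ‖v - U‖ ^ 2 * f v) (hT_pos : 0 < T)
    (M : EuclideanSpace ℝ (Fin d) → ℝ)
    (hM : ∀ v, M v = ρ / (2 * π * T) ^ ((d : ℝ) / 2) * Real.exp (-‖v - U‖ ^ 2 / (2 * T)))
    (hQlog_int : Integrable (fun v => ν * (M v - f v) * Real.log (f v))) :
    (∫ v, ν * (M v - f v) * Real.log (f v)) ≤ 0 ∧
    ((∫ v, ν * (M v - f v) * Real.log (f v)) = 0 ↔ f =ᵐ[volume] M) := by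
  -- As `1 / 0 = 0` and non-integrable functions have integral `0`, `T > 0` forces `d * ρ ≠ 0`
  -- and the integrability of `f` and of `‖v - U‖ ^ 2 * f`.
  have hT_ne : 1 / (d * ρ) * ∫ v, ‖v - U‖ ^ 2 * f v ≠ 0 := hT ▸ hT_pos.ne'
  have hdρ : (d : ℝ) * ρ ≠ 0 := fun h => hT_ne (by simp [h])
  have hf₂ : Integrable (fun v => ‖v - U‖ ^ 2 * f v) :=
    .of_integral_ne_zero (right_ne_zero_of_mul hT_ne)
  obtain ⟨hd, hρ_ne⟩ := mul_ne_zero_iff.1 hdρ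
  have hf : Integrable f := .of_integral_ne_zero (hρ ▸ hρ_ne)
  have hρ_pos : 0 < ρ := (hρ ▸ integral_nonneg fun v => (hf_pos v).le).lt_of_ne' hρ_ne
  have : NeZero d := ⟨by exact_mod_cast hd⟩
  have hM_eq : M = maxwellian ρ U T :=
    funext fun v => by rw [hM, maxwellian, finrank_euclideanSpace_fin]
  have henergy : ∫ v, ‖v - U‖ ^ 2 * f v = finrank ℝ (EuclideanSpace ℝ (Fin d)) * ρ * T := by
    rw [finrank_euclideanSpace_fin, hT]; field_simp
  subst hM_eq
  simp_rw [mul_assoc ν] at hQlog_int ⊢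
  obtain ⟨hle, hiff⟩ := integral_sub_mul_log_nonpos_and_eq_zero_iff hf_pos
    (maxwellian_pos hρ_pos hT_pos) (integrable_sub_mul_log_maxwellian hρ_pos hT_pos hf hf₂)
    ((integrable_const_mul_iff hν.ne'.isUnit _).1 hQlog_int)
    (integral_sub_mul_log_maxwellian_eq_zero hρ_pos hT_pos hf hf₂ hρ.symm henergy)
  rw [integral_const_mul, mul_eq_zero, or_iff_right hν.ne']
  exact ⟨mul_nonpos_of_nonneg_of_nonpos hν.le hle, hiff⟩

theorem bgk_H_theorem
    (d : ℕ) (ν : ℝ) (hν : 0 < ν)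
    (f : EuclideanSpace ℝ (Fin d) → ℝ)
    (hf_pos : ∀ v, 0 < f v)
    (hf_int : Integrable f)
    (hf_mom2 : Integrable (fun v => ‖v‖ ^ 2 * f v))
    (hf_log : Integrable (fun v => f v * Real.log (f v)))
    (ρ : ℝ) (hρ : ρ = ∫ v, f v)
    (U : EuclideanSpace ℝ (Fin d))
    (hU : ∀ i : Fin d, U i = (1 / ρ) * ∫ v, v i * f v)
    (T : ℝ) (hT : T = (1 / (d * ρ)) * ∫ v, ‖v - U‖ ^ 2 * f v) (hT_pos : 0 < T)
    (M : EuclideanSpace ℝ (Fin d) → ℝ)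
    (hM : ∀ v, M v = ρ / (2 * π * T) ^ ((d : ℝ) / 2) * Real.exp (-‖v - U‖ ^ 2 / (2 * T)))
    (hQlog_int : Integrable (fun v => ν * (M v - f v) * Real.log (f v))) :
    (∫ v, ν * (M v - f v) * Real.log (f v)) ≤ 0 ∧
    ((∫ v, ν * (M v - f v) * Real.log (f v)) = 0 ↔ f =ᵐ[volume] M) :=
  bgk_H_theorem_general d ν hν f hf_pos ρ hρ U T hT hT_pos M hM hQlog_int
end
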